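/- Let H be a complex Hilbert space, γ : H → H a bounded linear operator with γ∘γ = −I and γ* = −γ, and let L ⊆ H be a closed subspace with γ(L) = L^⊥. Then the orthogonal projection of H onto the eigenspace E_i = ker(γ − i·I) restricts to a continuous linear bijection from L onto E_i, and likewise the orthogonal projection onto E_{−i} = ker(γ + i·I) restricts to a continuous linear bijection from L onto E_{−i}. -/

import Mathlib

/-!
For `ε = ±i` the orthogonal projection onto `E_ε` is `P x = (x - ε γ x) / 2`: this vector is an
`ε`-eigenvector, and the remainder `(x + ε γ x) / 2` is a `(-ε)`-eigenvector, hence orthogonal to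
`E_ε` because `γ` is skew-adjoint.

Injectivity on `L`: if `x ∈ L` and `x = ε γ x`, then `‖x‖² = ε ⟪x, γ x⟫ = 0` since `γ x ∈ Lᗮ`.
Surjectivity: `H = L ⊕ Lᗮ = L ⊕ γ L`, so `u ∈ E_ε` is `a + γ c` with `a, c ∈ L`; as `P ∘ γ = ε P`
and `P u = u`, the vector `a + ε c ∈ L` is a preimage of `u`.
-/

namespace ContinuousLinearMap

variable {H : Type*} [NormedAddCommGroup H] [InnerProductSpace ℂ H]

abbrev eigenKer (γ : H →L[ℂ] H) (ε : ℂ) : Submodule ℂ H :=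
  LinearMap.ker ((γ - ε • (1 : H →L[ℂ] H) : H →L[ℂ] H) : H →ₗ[ℂ] H)

variable {γ : H →L[ℂ] H} {ε : ℂ}

theorem mem_eigenKer_iff {x : H} : x ∈ γ.eigenKer ε ↔ γ x = ε • x := by
  simp [sub_eq_zero]

theorem eigenKer_neg :
    γ.eigenKer (-ε) = LinearMap.ker ((γ + ε • (1 : H →L[ℂ] H) : H →L[ℂ] H) : H →ₗ[ℂ] H) := by
  rw [eigenKer, neg_smul, sub_neg_eq_add]

theorem inner_eq_zero_of_adjoint_eq_neg [CompleteSpace H] {μ ν : ℂ} (hadj : adjoint γ = -γ)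
    {u v : H} (hu : γ u = μ • u) (hv : γ v = ν • v) (hμν : starRingEnd ℂ μ + ν ≠ 0) :
    inner ℂ u v = 0 := by
  have h : starRingEnd ℂ μ * inner ℂ u v = -(ν * inner ℂ u v) := by
    rw [← inner_smul_left, ← hu, ← adjoint_inner_right, hadj, neg_apply, hv, inner_neg_right,
      inner_smul_right]
  have h' : (starRingEnd ℂ μ + ν) * inner ℂ u v = 0 := by linear_combination h
  exact (mul_eq_zero.mp h').resolve_left hμν

theorem apply_sub_smul_apply (hsq : ∀ x, γ (γ x) = -x) (hε : ε * ε = -1) (x : H) :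
    γ (x - ε • γ x) = ε • (x - ε • γ x) := by
  rw [map_sub, map_smul, hsq, smul_sub, smul_smul, hε, smul_neg, neg_smul, one_smul]
  abel

theorem eq_half_sub_smul_apply_of_isOrthogonalProjection [CompleteSpace H]
    (hsq : ∀ x, γ (γ x) = -x) (hadj : adjoint γ = -γ) (hε : ε * ε = -1)
    (hconj : starRingEnd ℂ ε = -ε) {P : H →L[ℂ] H}
    (hPmem : ∀ x, P x ∈ γ.eigenKer ε) (hPorth : ∀ x, x - P x ∈ (γ.eigenKer ε)ᗮ) (x : H) :
    P x = (2 : ℂ)⁻¹ • (x - ε • γ x) := by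
  have hε0 : ε ≠ 0 := fun h => by simp [h] at hε
  set q : H := (2 : ℂ)⁻¹ • (x - ε • γ x)
  have hq : q ∈ γ.eigenKer ε := by
    rw [mem_eigenKer_iff, map_smul, apply_sub_smul_apply hsq hε, smul_comm]
  have hxq : x - q ∈ (γ.eigenKer ε)ᗮ := by
    have hrest : x - q = (2 : ℂ)⁻¹ • (x - (-ε) • γ x) := by
      simp only [q, neg_smul, sub_neg_eq_add]
      match_scalars <;> ring
    have heig : γ (x - q) = (-ε) • (x - q) := by
      rw [hrest, map_smul, apply_sub_smul_apply hsq (by linear_combination hε), smul_comm]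
    refine (Submodule.mem_orthogonal' _ _).mpr fun u hu => ?_
    refine inner_eq_zero_of_adjoint_eq_neg hadj heig (mem_eigenKer_iff.mp hu) ?_
    rw [map_neg, hconj, neg_neg, ← two_mul]
    exact mul_ne_zero two_ne_zero hε0
  have hsub : P x - q ∈ (γ.eigenKer ε)ᗮ := by
    simpa using Submodule.sub_mem _ hxq (hPorth x)
  exact sub_eq_zero.mp <| Submodule.disjoint_def.mp (γ.eigenKer ε).orthogonal_disjoint _
    (Submodule.sub_mem _ (hPmem x) hq) hsub

theorem eq_zero_of_eq_smul_apply {L : Submodule ℂ H} (hL : L.map (γ : H →ₗ[ℂ] H) ≤ Lᗮ)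
    {x : H} (hx : x ∈ L) {c : ℂ} (h : x = c • γ x) : x = 0 := by
  have hγx : inner ℂ x (γ x) = 0 :=
    (Submodule.mem_orthogonal _ _).mp (hL (Submodule.mem_map_of_mem hx)) x hx
  rw [← inner_self_eq_zero (𝕜 := ℂ)]
  nth_rewrite 2 [h]
  rw [inner_smul_right, hγx, mul_zero]

theorem exists_eq_add_apply [CompleteSpace H] {L : Submodule ℂ H}
    (hLclosed : IsClosed (L : Set H)) (hL : Lᗮ ≤ L.map (γ : H →ₗ[ℂ] H)) (u : H) :
    ∃ a ∈ L, ∃ c ∈ L, u = a + γ c := by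
  have : CompleteSpace L := hLclosed.completeSpace_coe
  obtain ⟨a, ha, b, hb, rfl⟩ := Submodule.exists_add_mem_mem_orthogonal (K := L) u
  obtain ⟨c, hc, rfl⟩ := hL hb
  exact ⟨a, ha, c, hc, rfl⟩

theorem bijOn_eigenKer_of_eq_half_sub_smul_apply [CompleteSpace H] (hsq : ∀ x, γ (γ x) = -x)
    {L : Submodule ℂ H} (hLclosed : IsClosed (L : Set H)) (hLag : L.map (γ : H →ₗ[ℂ] H) = Lᗮ)
    (hε : ε * ε = -1) {P : H →L[ℂ] H} (hP : ∀ x, P x = (2 : ℂ)⁻¹ • (x - ε • γ x)) :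
    Set.BijOn P L (γ.eigenKer ε) := by
  have hPγ : ∀ y, P (γ y) = ε • P y := by
    intro y
    rw [hP, hP, smul_comm ε, ← apply_sub_smul_apply hsq hε, map_sub, map_smul]
  have hPfix : ∀ u ∈ γ.eigenKer ε, P u = u := by
    intro u hu
    rw [hP, mem_eigenKer_iff.mp hu, smul_smul, hε]
    match_scalars
    ring
  refine ⟨fun x _ => ?_, fun x hx y hy hxy => ?_, fun u hu => ?_⟩
  · rw [hP, SetLike.mem_coe, mem_eigenKer_iff, map_smul, apply_sub_smul_apply hsq hε, smul_comm]
  · have hfix : x - y = ε • γ (x - y) := by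
      have h0 := hP (x - y)
      rw [map_sub, hxy, sub_self, eq_comm, smul_eq_zero, sub_eq_zero] at h0
      exact h0.resolve_left (by norm_num)
    exact sub_eq_zero.mp (eq_zero_of_eq_smul_apply hLag.le (L.sub_mem hx hy) hfix)
  · obtain ⟨a, ha, c, hc, rfl⟩ := exists_eq_add_apply hLclosed hLag.ge u
    refine ⟨a + ε • c, L.add_mem ha (L.smul_mem ε hc), ?_⟩
    calc P (a + ε • c) = P (a + γ c) := by rw [map_add, map_add, map_smul, hPγ]
      _ = a + γ c := hPfix _ hu

theorem bijOn_eigenKer_of_isOrthogonalProjection [CompleteSpace H] (hsq : ∀ x, γ (γ x) = -x)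
    (hadj : adjoint γ = -γ) {L : Submodule ℂ H} (hLclosed : IsClosed (L : Set H))
    (hLag : L.map (γ : H →ₗ[ℂ] H) = Lᗮ)
    (hε : ε * ε = -1) (hconj : starRingEnd ℂ ε = -ε) {P : H →L[ℂ] H}
    (hPmem : ∀ x, P x ∈ γ.eigenKer ε) (hPorth : ∀ x, x - P x ∈ (γ.eigenKer ε)ᗮ) :
    Set.BijOn P L (γ.eigenKer ε) :=
  bijOn_eigenKer_of_eq_half_sub_smul_apply hsq hLclosed hLag hε
    (eq_half_sub_smul_apply_of_isOrthogonalProjection hsq hadj hε hconj hPmem hPorth)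

end ContinuousLinearMap

theorem statement1 {H : Type*} [NormedAddCommGroup H] [InnerProductSpace ℂ H]
    [CompleteSpace H] (γ : H →L[ℂ] H)
    (hsq : γ ∘L γ = -1)
    (hadj : ContinuousLinearMap.adjoint γ = -γ)
    (L : Submodule ℂ H) (hLclosed : IsClosed (L : Set H)) (hLag : L.map (γ : H →ₗ[ℂ] H) = Lᗮ) :
    (∀ Pi : H →L[ℂ] H,
        (∀ x, Pi x ∈ LinearMap.ker (((γ - Complex.I • (1 : H →L[ℂ] H) : H →L[ℂ] H) : H →ₗ[ℂ] H))) →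
        (∀ x, x - Pi x ∈ (LinearMap.ker (((γ - Complex.I • (1 : H →L[ℂ] H) : H →L[ℂ] H) : H →ₗ[ℂ] H)))ᗮ) →
        Set.BijOn Pi (L : Set H)
          ((LinearMap.ker (((γ - Complex.I • (1 : H →L[ℂ] H) : H →L[ℂ] H) : H →ₗ[ℂ] H)) : Submodule ℂ H) : Set H)) ∧
    (∀ Pmi : H →L[ℂ] H,
        (∀ x, Pmi x ∈ LinearMap.ker (((γ + Complex.I • (1 : H →L[ℂ] H) : H →L[ℂ] H) : H →ₗ[ℂ] H))) →
        (∀ x, x - Pmi x ∈ (LinearMap.ker (((γ + Complex.I • (1 : H →L[ℂ] H) : H →L[ℂ] H) : H →ₗ[ℂ] H)))ᗮ) →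
        Set.BijOn Pmi (L : Set H)
          ((LinearMap.ker (((γ + Complex.I • (1 : H →L[ℂ] H) : H →L[ℂ] H) : H →ₗ[ℂ] H)) : Submodule ℂ H) : Set H)) := by
  open ContinuousLinearMap in
  have hγγ : ∀ x, γ (γ x) = -x := fun x => by simpa using congr($hsq x)
  refine ⟨fun Pi hPmem hPorth => ?_, fun Pmi hPmem hPorth => ?_⟩
  · exact bijOn_eigenKer_of_isOrthogonalProjection hγγ hadj hLclosed hLag Complex.I_mul_I
      Complex.conj_I hPmem hPorth
  · rw [← eigenKer_neg] at hPmem hPorth ⊢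
    exact bijOn_eigenKer_of_isOrthogonalProjection hγγ hadj hLclosed hLag (by simp) (by simp)
      hPmem hPorth
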